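/- Let m ≥ 1 and let k_1,…,k_m, l_1,…,l_m be integers with k_i ≥ 1 and l_i ≥ 1 for all i and l_m ≥ 2. Let λ ∈ ℂ be not a positive integer and set λ′ = λ − 1. Then [{(n−1)^{k_1}, l_1, (n−1)^{k_2}, l_2, …, (n−1)^{k_m}, l_m}; λ] = [{n^{k_1}, l_1, n^{k_2}, l_2, …, n^{k_m}, l_m}; λ′] − (1/λ′)·[{n^{k_1}, l_1, n^{k_2}, l_2, …, n^{k_m}, l_m−1}; λ′]; here on the left every block carries the shift (n−1) and the bracket is evaluated at λ, while on the right all blocks are unshifted and the brackets are evaluated at λ′. -/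

import Mathlib

/-- Strictly decreasing sequences of positive integers of length `L`
(encoded as functions `ℕ → ℕ` vanishing from `L` on). -/
def DecSeq (L : ℕ) : Type :=
  {n : ℕ → ℕ //
    (∀ i j : ℕ, i < j → j < L → n j < n i) ∧ (∀ i, i < L → 0 < n i) ∧ ∀ i, L ≤ i → n i = 0}

/-- `Lpart m l i = l₁ + ⋯ + l_{i-1}` (0-indexed: the sum of the `l j` for `j < i`),
i.e. the flat index of the first entry of the `i`-th block. -/
def Lpart (m : ℕ) (l : Fin m → ℕ) (i : Fin m) : ℕ :=
  ∑ j : Fin m, if j < i then l j else 0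

/-- The bracket series
`[{(n-aᵢ)^{kᵢ}, lᵢ}ᵢ; λ] = Σ_{n₁ > ⋯ > n_{L_m} > 0}
  ∏ᵢ [ 1/(n_{L_{i-1}+1} - aᵢ)^{kᵢ} ∏_j 1/(n_j - λ) ]`;
the bracket with all shifts `aᵢ = 0` is the generating function `f({kᵢ,lᵢ}ᵢ; λ)`. -/
noncomputable def brak (m : ℕ) (a k l : Fin m → ℕ) (lam : ℂ) : ℂ :=
  ∑' n : DecSeq (∑ j, l j),
    ∏ i : Fin m,
      (1 / ((n.1 (Lpart m l i) : ℂ) - (a i : ℂ)) ^ k i *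
        ∏ j ∈ Finset.Ico (Lpart m l i) (Lpart m l i + l i), 1 / ((n.1 j : ℂ) - lam))

/-!
Writing `n_j = n'_j + 1` turns the shifted bracket at `λ` into a sum of unshifted summands at
`λ - 1` over `n'_1 > ⋯ > n'_L ≥ 0`. The sequences with `n'_L > 0` give the first bracket on the
right. In the others, `n'_L = 0` sits in the tail of the last block and contributes the factor
`1 / (0 - (λ - 1))`, times a summand of the bracket whose last block is one entry shorter.
Splitting the sum in this way needs absolute convergence, which follows from
`|summand| ≲ (n_1 + 1)⁻¹ ∏ⱼ (n_j + 1)⁻¹ ≤ ∏ⱼ (n_j + 1)^(-(1 + 1/(L+1)))`.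
-/

open Finset

section Lpart

variable {m : ℕ} (l : Fin m → ℕ)

lemma Lpart_eq_sum_Iio (i : Fin m) : Lpart m l i = ∑ j ∈ Iio i, l j := by
  rw [Lpart, ← sum_filter, filter_gt_eq_Iio]

lemma Lpart_add_eq_sum_Iic (i : Fin m) : Lpart m l i + l i = ∑ j ∈ Iic i, l j := by
  rw [Lpart_eq_sum_Iio, Iic_eq_cons_Iio, sum_cons, add_comm]

lemma Lpart_mono : Monotone (Lpart m l) := fun _ _ h => by
  simpa only [Lpart_eq_sum_Iio] using sum_le_sum_of_subset (Iio_subset_Iio h)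

lemma Lpart_add_le_sum (i : Fin m) : Lpart m l i + l i ≤ ∑ j, l j := by
  rw [Lpart_add_eq_sum_Iic]
  exact sum_le_sum_of_subset (subset_univ _)

lemma Lpart_last_add (hm : 0 < m) :
    Lpart m l ⟨m - 1, by omega⟩ + l ⟨m - 1, by omega⟩ = ∑ j, l j := by
  rw [Lpart_add_eq_sum_Iic]
  congr 1
  ext j
  simp only [mem_Iic, mem_univ, iff_true, Fin.le_def]
  omega

lemma Lpart_lt_sum (hm : 0 < m) (hlast : 0 < l ⟨m - 1, by omega⟩) (i : Fin m) :
    Lpart m l i < ∑ j, l j := by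
  have hi : i ≤ ⟨m - 1, by omega⟩ := Fin.le_def.2 (by simp only; omega)
  have := Lpart_last_add l hm
  have := Lpart_mono l hi
  omega

lemma Lpart_zero (hm : 0 < m) : Lpart m l ⟨0, hm⟩ = 0 := by
  simp [Lpart_eq_sum_Iio, Fin.lt_def]

lemma sum_castLE_eq_Lpart (i : Fin m) :
    ∑ j : Fin i, l (Fin.castLE i.2.le j) = Lpart m l i := by
  rw [Lpart_eq_sum_Iio]
  exact sum_bij (fun j _ => Fin.castLE i.2.le j) (fun j _ => by simp [Fin.lt_def])
    (fun _ _ _ _ h => Fin.castLE_injective _ h)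
    (fun j hj => ⟨⟨j, Fin.lt_def.1 (mem_Iio.1 hj)⟩, mem_univ _, rfl⟩) fun _ _ => rfl

lemma prod_Ico_Lpart {M : Type*} [CommMonoid M] (f : ℕ → M) :
    ∏ i, ∏ j ∈ Ico (Lpart m l i) (Lpart m l i + l i), f j = ∏ j ∈ range (∑ i, l i), f j := by
  rw [← Fin.prod_univ_eq_prod_range, ← finSigmaFinEquiv.prod_comp, Fintype.prod_sigma]
  refine prod_congr rfl fun i _ => ?_
  simp only [finSigmaFinEquiv_apply, sum_castLE_eq_Lpart, prod_Ico_eq_prod_range,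
    add_tsub_cancel_left]
  exact (Fin.prod_univ_eq_prod_range (fun j => f (Lpart m l i + j)) _).symm

end Lpart

noncomputable def brakTerm (m : ℕ) (a k l : Fin m → ℕ) (lam : ℂ) (v : ℕ → ℕ) : ℂ :=
  ∏ i : Fin m, (1 / ((v (Lpart m l i) : ℂ) - (a i : ℂ)) ^ k i *
      ∏ j ∈ Ico (Lpart m l i) (Lpart m l i + l i), 1 / ((v j : ℂ) - lam))

def decLast {m : ℕ} (l : Fin m → ℕ) : Fin m → ℕ :=
  fun j => if j.1 = m - 1 then l j - 1 else l j

section brakTerm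

variable {m : ℕ} (a k l : Fin m → ℕ)

lemma brak_eq_tsum_brakTerm {L : ℕ} (hL : ∑ j, l j = L) (lam : ℂ) :
    brak m a k l lam = ∑' n : DecSeq L, brakTerm m a k l lam n.1 := by
  subst hL
  rfl

lemma brakTerm_congr {v w : ℕ → ℕ} (hm : 0 < m) (hlast : 0 < l ⟨m - 1, by omega⟩) (lam : ℂ)
    (hvw : ∀ j < ∑ i, l i, v j = w j) : brakTerm m a k l lam v = brakTerm m a k l lam w := by
  refine prod_congr rfl fun i _ => ?_
  rw [hvw _ (Lpart_lt_sum l hm hlast i)]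
  congr 1
  refine prod_congr rfl fun j hj => ?_
  rw [hvw j ((mem_Ico.1 hj).2.trans_le (Lpart_add_le_sum l i))]

lemma brakTerm_add_one (lam : ℂ) (v : ℕ → ℕ) :
    brakTerm m (fun i => a i + 1) k l lam (fun j => v j + 1) = brakTerm m a k l (lam - 1) v := by
  simp only [brakTerm, Nat.cast_add, Nat.cast_one, add_sub_add_right_eq_sub, sub_sub_eq_add_sub]

lemma Lpart_decLast : Lpart m (decLast l) = Lpart m l := by
  ext i
  simp only [Lpart_eq_sum_Iio]
  refine sum_congr rfl fun j hj => if_neg ?_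
  have := Fin.lt_def.1 (mem_Iio.1 hj)
  omega

lemma sum_decLast_add_one (hm : 0 < m) (hlast : 0 < l ⟨m - 1, by omega⟩) :
    ∑ j, decLast l j + 1 = ∑ j, l j := by
  rw [← Lpart_last_add l hm, ← Lpart_decLast l, ← Lpart_last_add (decLast l) hm, decLast,
    if_pos rfl]
  omega

lemma brakTerm_eq_brakTerm_decLast_mul (hm : 0 < m) (hlast : 0 < l ⟨m - 1, by omega⟩) (lam : ℂ)
    (v : ℕ → ℕ) : brakTerm m a k l lam v
      = brakTerm m a k (decLast l) lam v * (1 / ((v (∑ j, decLast l j) : ℂ) - lam)) := by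
  set last : Fin m := ⟨m - 1, by omega⟩
  have hsplit : ∀ i, ∏ j ∈ Ico (Lpart m l i) (Lpart m l i + l i), 1 / ((v j : ℂ) - lam)
      = (∏ j ∈ Ico (Lpart m l i) (Lpart m l i + decLast l i), 1 / ((v j : ℂ) - lam)) *
        if i = last then 1 / ((v (∑ j, decLast l j) : ℂ) - lam) else 1 := by
    intro i
    split_ifs with hi
    · subst hi
      have hdec : decLast l last + 1 = l last := by
        simp only [decLast, last, if_pos]
        exact Nat.sub_add_cancel hlast
      rw [← hdec, ← add_assoc, prod_Ico_succ_top (by omega), ← Lpart_last_add (decLast l) hm,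
        Lpart_decLast]
    · rw [decLast, if_neg (fun h => hi (Fin.ext h)), mul_one]
  simp only [brakTerm, hsplit, Lpart_decLast, ← mul_assoc, prod_mul_distrib, prod_ite_eq',
    mem_univ, if_true]

end brakTerm

namespace DecSeq

variable {L M : ℕ}

lemma ext_of_lt {n n' : DecSeq L} (h : ∀ j < L, n.1 j = n'.1 j) : n = n' :=
  Subtype.ext <| funext fun j =>
    if hj : j < L then h j hj else by rw [n.2.2.2 j (not_lt.1 hj), n'.2.2.2 j (not_lt.1 hj)]

lemma apply_le_apply (n : DecSeq L) {i j : ℕ} (hij : i ≤ j) (hj : j < L) : n.1 j ≤ n.1 i := by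
  rcases hij.lt_or_eq with hij | rfl
  exacts [(n.2.1 i j hij hj).le, le_rfl]

/-- For `L = M + 1` this appends the entry `1`, since `n_M = 0`. -/
def succ (n : DecSeq M) (hL : L ≤ M + 1) : DecSeq L :=
  ⟨fun j => if j < L then n.1 j + 1 else 0,
    fun i j hij hj => by
      simp only [if_pos hj, if_pos (hij.trans hj)]
      rcases lt_or_eq_of_le (Nat.lt_succ_iff.1 (hj.trans_le hL)) with hjM | rfl
      · exact Nat.succ_lt_succ (n.2.1 i j hij hjM)
      · rw [n.2.2.2 _ le_rfl]
        exact Nat.succ_lt_succ (n.2.2.1 i hij),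
    fun i hi => by simp only [if_pos hi]; omega,
    fun i hi => if_neg (not_lt.2 hi)⟩

lemma succ_apply (n : DecSeq M) (hL : L ≤ M + 1) {j : ℕ} (hj : j < L) :
    (n.succ hL).1 j = n.1 j + 1 :=
  if_pos hj

def pred (x : DecSeq L) (hM : ∀ j, j < M ↔ 2 ≤ x.1 j) : DecSeq M :=
  ⟨fun j => x.1 j - 1,
    fun i j hij hj => by
      have hxj := (hM j).1 hj
      have hjL : j < L := by_contra fun h => by rw [x.2.2.2 j (not_lt.1 h)] at hxj; omega
      have := x.2.1 i j hij hjL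
      dsimp only
      omega,
    fun i hi => by have := (hM i).1 hi; dsimp only; omega,
    fun i hi => by have := (hM i).not.1 (not_lt.2 hi); dsimp only; omega⟩

lemma succ_pred (x : DecSeq L) (hM : ∀ j, j < M ↔ 2 ≤ x.1 j) (hL : L ≤ M + 1) :
    (x.pred hM).succ hL = x :=
  ext_of_lt fun j hj => by
    rw [succ_apply _ _ hj]
    have := x.2.2.1 j hj
    exact Nat.sub_add_cancel this

/-- The inverse is `x ↦ x - 1`, which lands in `DecSeq L` exactly when `x_L = 1`. -/
noncomputable def succSumEquiv (L : ℕ) : DecSeq L ⊕ DecSeq (L + 1) ≃ DecSeq (L + 1) :=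
  Equiv.ofBijective (Sum.elim (·.succ le_rfl) (·.succ (Nat.le_succ _))) <| by
    refine ⟨Function.Injective.sumElim ?_ ?_ fun n n' h => ?_, fun x => ?_⟩
    · exact fun n n' h => ext_of_lt fun j hj => by
        simpa [succ_apply _ _ (hj.trans (Nat.lt_succ_self L))] using congrArg (·.1 j) h
    · exact fun n n' h => ext_of_lt fun j hj => by
        simpa [succ_apply _ _ hj] using congrArg (·.1 j) h
    · have := congrArg (·.1 L) h
      simp only [succ_apply _ _ (Nat.lt_succ_self L), n.2.2.2 L le_rfl] at this
      have := n'.2.2.1 L (Nat.lt_succ_self L)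
      omega
    · have hxL := x.2.2.1 L (Nat.lt_succ_self L)
      have hlt : ∀ j, 2 ≤ x.1 j → j < L + 1 := fun j hj =>
        by_contra fun h => by rw [x.2.2.2 j (not_lt.1 h)] at hj; omega
      by_cases h1 : x.1 L = 1
      · have hM : ∀ j, j < L ↔ 2 ≤ x.1 j := fun j =>
          ⟨fun hj => by have := x.2.1 j L hj (Nat.lt_succ_self L); omega, fun hj => by
            have := hlt j hj
            rcases Nat.lt_succ_iff_lt_or_eq.1 this with h | rfl
            exacts [h, by omega]⟩
        exact ⟨.inl (x.pred hM), succ_pred x hM le_rfl⟩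
      · have hM : ∀ j, j < L + 1 ↔ 2 ≤ x.1 j := fun j =>
          ⟨fun hj => by
            have := x.apply_le_apply (Nat.lt_succ_iff.1 hj) (Nat.lt_succ_self L)
            omega, hlt j⟩
        exact ⟨.inr (x.pred hM), succ_pred x hM (Nat.le_succ _)⟩

lemma tsum_eq_tsum_succ_add_tsum_succ {E : Type*} [NormedAddCommGroup E] [CompleteSpace E]
    {f : DecSeq (L + 1) → E} (hf : Summable f) :
    ∑' x, f x
      = ∑' n : DecSeq L, f (n.succ le_rfl) + ∑' n : DecSeq (L + 1), f (n.succ (Nat.le_succ _)) := by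
  have hf' := (succSumEquiv L).summable_iff.2 hf
  rw [← (succSumEquiv L).tsum_eq]
  exact Summable.tsum_sum (hf'.comp_injective Sum.inl_injective)
    (hf'.comp_injective Sum.inr_injective)

end DecSeq

lemma norm_inv_natCast_sub_natCast_le_one (t a : ℕ) : ‖((t : ℂ) - a)⁻¹‖ ≤ 1 := by
  have h : (t : ℂ) - a = (((t : ℤ) - a : ℤ) : ℂ) := by push_cast; ring
  rw [h, norm_inv, Complex.norm_intCast]
  rcases eq_or_ne (t : ℤ) a with h | h
  · simp [h]
  · exact inv_le_one_of_one_le₀ (by exact_mod_cast Int.one_le_abs (sub_ne_zero.2 h))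

-- `(t + 1) / (t - μ) → 1`; at `t = μ` the junk value `0⁻¹ = 0` keeps the bound valid.
open Filter Topology in
lemma exists_norm_inv_natCast_sub_le (μ : ℂ) :
    ∃ C, ∀ t : ℕ, ‖((t : ℂ) - μ)⁻¹‖ ≤ C / (t + 1) := by
  have hlim : Tendsto (fun t : ℕ => ((t + 1 : ℕ) : ℂ) / ((t + 1 : ℕ) + (-μ - 1))) atTop (𝓝 1) :=
    (tendsto_natCast_div_add_atTop _).comp (tendsto_add_atTop_nat 1)
  obtain ⟨C, hC⟩ := isBounded_iff_forall_norm_le.1 (Metric.isBounded_range_of_tendsto _ hlim)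
  refine ⟨C, fun t => (le_div_iff₀' (by positivity)).2 ?_⟩
  have hCt : ‖((t + 1 : ℕ) : ℂ) / ((t + 1 : ℕ) + (-μ - 1))‖ ≤ C := hC _ ⟨t, rfl⟩
  have ht : ((t + 1 : ℕ) : ℂ) + (-μ - 1) = (t : ℂ) - μ := by push_cast; ring
  rw [ht, norm_div, Complex.norm_natCast, div_eq_mul_inv, ← norm_inv] at hCt
  exact_mod_cast hCt

lemma summable_fin_pi_prod {g : ℕ → ℝ} (h0 : ∀ t, 0 ≤ g t) (hg : Summable g) (N : ℕ) :
    Summable fun v : Fin N → ℕ => ∏ j, g (v j) := by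
  induction N with
  | zero => exact Summable.of_finite
  | succ N ih =>
    rw [← (Fin.consEquiv fun _ => ℕ).summable_iff]
    convert hg.mul_of_nonneg ih h0 (fun v => prod_nonneg fun j _ => h0 _) using 2 with p
    simp [Fin.prod_univ_succ]

lemma inv_mul_prod_inv_le_prod_rpow_inv {L : ℕ} (x : Fin L → ℝ) {x₀ : ℝ} (hx : ∀ j, 1 ≤ x j)
    (hx₀ : ∀ j, x j ≤ x₀) (h1 : 1 ≤ x₀) :
    x₀⁻¹ * ∏ j, (x j)⁻¹ ≤ ∏ j, (x j ^ (1 + ((L : ℝ) + 1)⁻¹))⁻¹ := by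
  set r : ℝ := ((L : ℝ) + 1)⁻¹
  have hsplit : ∏ j, (x j ^ (1 + r))⁻¹ = (∏ j, x j ^ r)⁻¹ * ∏ j, (x j)⁻¹ := by
    rw [← prod_inv_distrib, ← prod_mul_distrib]
    refine prod_congr rfl fun j _ => ?_
    rw [Real.rpow_add (by linarith [hx j]), Real.rpow_one, mul_inv, mul_comm]
  have hprod : ∏ j, x j ^ r ≤ x₀ :=
    calc ∏ j, x j ^ r ≤ ∏ _j : Fin L, x₀ ^ r :=
          prod_le_prod (fun j _ => (Real.rpow_pos_of_pos (by linarith [hx j]) r).le)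
            fun j _ => Real.rpow_le_rpow (by linarith [hx j]) (hx₀ j) (by positivity)
      _ = x₀ ^ (r * L) := by
          rw [prod_const, card_univ, Fintype.card_fin, Real.rpow_mul_natCast (by linarith)]
      _ ≤ x₀ ^ (1 : ℝ) := Real.rpow_le_rpow_of_exponent_le h1 <| by
          rw [inv_mul_le_iff₀ (by positivity)]
          linarith
      _ = x₀ := Real.rpow_one x₀
  rw [hsplit]
  exact mul_le_mul_of_nonneg_right
    (inv_anti₀ (prod_pos fun j _ => Real.rpow_pos_of_pos (by linarith [hx j]) r) hprod)
    (prod_nonneg fun j _ => inv_nonneg.2 (by linarith [hx j]))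

lemma norm_brakTerm_le {m : ℕ} (hm : 0 < m) (a k l : Fin m → ℕ) (hk : 1 ≤ k ⟨0, hm⟩) (lam : ℂ)
    {Ca Cl : ℝ} (hCa : ∀ t : ℕ, ‖((t : ℂ) - a ⟨0, hm⟩)⁻¹‖ ≤ Ca / (t + 1))
    (hCl : ∀ t : ℕ, ‖((t : ℂ) - lam)⁻¹‖ ≤ Cl / (t + 1)) (v : ℕ → ℕ) :
    ‖brakTerm m a k l lam v‖ ≤ Ca / (v 0 + 1) * ∏ j ∈ range (∑ i, l i), Cl / (v j + 1) := by
  rw [brakTerm, prod_mul_distrib, prod_Ico_Lpart, norm_mul, norm_prod, norm_prod]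
  have hfirst : ∀ i, ‖1 / ((v (Lpart m l i) : ℂ) - a i) ^ k i‖
      = ‖((v (Lpart m l i) : ℂ) - a i)⁻¹‖ ^ k i := fun i => by
    rw [one_div, norm_inv, norm_pow, norm_inv, inv_pow]
  have hA : ∏ i, ‖1 / ((v (Lpart m l i) : ℂ) - a i) ^ k i‖ ≤ Ca / (v 0 + 1) := by
    rw [← mul_prod_erase _ _ (mem_univ ⟨0, hm⟩), hfirst, Lpart_zero l hm]
    refine (mul_le_of_le_one_right (by positivity) (prod_le_one (fun _ _ => norm_nonneg _)
      fun i _ => ?_)).trans ((pow_le_of_le_one (norm_nonneg _)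
        (norm_inv_natCast_sub_natCast_le_one _ _) (by omega)).trans (hCa _))
    rw [hfirst]
    exact pow_le_one₀ (norm_nonneg _) (norm_inv_natCast_sub_natCast_le_one _ _)
  have hB : ∏ j ∈ range (∑ i, l i), ‖1 / ((v j : ℂ) - lam)‖
      ≤ ∏ j ∈ range (∑ i, l i), Cl / (v j + 1) :=
    prod_le_prod (fun _ _ => norm_nonneg _) fun j _ => by rw [one_div]; exact hCl _
  exact mul_le_mul hA hB (prod_nonneg fun _ _ => norm_nonneg _)
    ((prod_nonneg fun _ _ => norm_nonneg _).trans hA)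

theorem summable_brakTerm {m : ℕ} (hm : 0 < m) (a k l : Fin m → ℕ) (hk : 1 ≤ k ⟨0, hm⟩)
    (lam : ℂ) : Summable fun n : DecSeq (∑ i, l i) => brakTerm m a k l lam n.1 := by
  set L := ∑ i, l i
  obtain ⟨Ca, hCa⟩ := exists_norm_inv_natCast_sub_le (a ⟨0, hm⟩)
  obtain ⟨Cl, hCl⟩ := exists_norm_inv_natCast_sub_le lam
  have hCa0 : 0 ≤ Ca := by simpa using (norm_nonneg _).trans (hCa 0)
  have hCl0 : 0 ≤ Cl := by simpa using (norm_nonneg _).trans (hCl 0)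
  set s : ℝ := 1 + ((L : ℝ) + 1)⁻¹
  have hg : Summable fun t : ℕ => (((t : ℝ) + 1) ^ s)⁻¹ := by
    have hs : 1 < s := lt_add_of_pos_right 1 (by positivity)
    simpa using (summable_nat_add_iff 1).2 (Real.summable_nat_rpow_inv.2 hs)
  have hinj : Function.Injective fun (n : DecSeq L) (j : Fin L) => n.1 j :=
    fun n n' h => DecSeq.ext_of_lt fun j hj => congrFun h ⟨j, hj⟩
  refine Summable.of_norm_bounded
    (((summable_fin_pi_prod (fun _ => by positivity) hg L).comp_injective hinj).mul_left
      (Ca * Cl ^ L)) fun n => ?_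
  calc _ ≤ Ca / (n.1 0 + 1) * ∏ j ∈ range L, Cl / (n.1 j + 1) :=
        norm_brakTerm_le hm a k l hk lam hCa hCl n.1
    _ = Ca * Cl ^ L * (((n.1 0 : ℝ) + 1)⁻¹ * ∏ j : Fin L, ((n.1 j : ℝ) + 1)⁻¹) := by
        rw [← Fin.prod_univ_eq_prod_range (fun j => Cl / ((n.1 j : ℝ) + 1))]
        simp only [div_eq_mul_inv, prod_mul_distrib, prod_const, card_univ, Fintype.card_fin]
        ring
    _ ≤ Ca * Cl ^ L * ∏ j : Fin L, (((n.1 j : ℝ) + 1) ^ s)⁻¹ := by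
        gcongr
        exact inv_mul_prod_inv_le_prod_rpow_inv _ (fun j => by simp)
          (fun j => by exact_mod_cast Nat.add_le_add_right (n.apply_le_apply (Nat.zero_le _) j.2) 1)
          (by simp)

/-- Lemma (iii)(d): for `l_m ≥ 2`, with every block shifted by `(n-1)` on the left
(evaluated at `λ`) and all blocks unshifted on the right (evaluated at `λ' = λ - 1`),
`[{(n-1)^{k₁},l₁,…,(n-1)^{k_m},l_m};λ]
  = [{n^{k₁},l₁,…,n^{k_m},l_m};λ'] - (1/λ')[{n^{k₁},l₁,…,n^{k_m},l_m-1};λ']`. -/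
theorem bracket_lemma_iiid (m : ℕ) (hm : 1 ≤ m) (k l : Fin m → ℕ)
    (hk : ∀ i, 1 ≤ k i) (hlm : 2 ≤ l ⟨m - 1, by omega⟩)
    (lam : ℂ) :
    brak m (fun _ => 1) k l lam
      = brak m (fun _ => 0) k l (lam - 1)
        - (1 / (lam - 1)) *
            brak m (fun _ => 0) k (fun j => if j.1 = m - 1 then l j - 1 else l j) (lam - 1) := by
  change _ = _ - _ * brak m (fun _ => 0) k (decLast l) (lam - 1)
  have hlast : 0 < l ⟨m - 1, by omega⟩ := by omega
  set L := ∑ j, decLast l j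
  have hL : ∑ j, l j = L + 1 := (sum_decLast_add_one l hm hlast).symm
  have hsum := summable_brakTerm hm (fun _ => 1) k l (hk _) lam
  rw [hL] at hsum
  have hshift : ∀ {M} (n : DecSeq M) (h : L + 1 ≤ M + 1),
      brakTerm m (fun _ => 1) k l lam (n.succ h).1 = brakTerm m (fun _ => 0) k l (lam - 1) n.1 :=
    fun n h => (brakTerm_congr _ _ _ hm hlast lam fun j hj =>
      DecSeq.succ_apply n h (hL ▸ hj)).trans (brakTerm_add_one _ _ _ _ _)
  have hsnoc : ∀ n : DecSeq L, brakTerm m (fun _ => 0) k l (lam - 1) n.1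
      = -(1 / (lam - 1)) * brakTerm m (fun _ => 0) k (decLast l) (lam - 1) n.1 := fun n => by
    rw [brakTerm_eq_brakTerm_decLast_mul _ _ l hm hlast, n.2.2.2 L le_rfl, Nat.cast_zero, zero_sub,
      one_div_neg_eq_neg_one_div, mul_comm]
  rw [brak_eq_tsum_brakTerm (fun _ => 1) k l hL, brak_eq_tsum_brakTerm (fun _ => 0) k l hL,
    brak_eq_tsum_brakTerm (fun _ => 0) k (decLast l) rfl,
    DecSeq.tsum_eq_tsum_succ_add_tsum_succ hsum]
  simp only [hshift, hsnoc, tsum_mul_left]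
  ring
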